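/- In (L, B, k) as below: (i) the group G of K-isometries of (L, B, k) is finite of order 120; (ii) the sequence (D₁, D₂, D₃, D₄, D₅, D₆, D₇) is a toric system of length 7 in (L, B, k); (iii) the map from G to sequences in L sending φ to (φ(D₁), …, φ(D₇)) is injective, so the orbit of the standard toric system under G consists of exactly 120 distinct toric systems. -/

import Mathlib

/- The Picard lattice of the toric surface `X = TV(-2,-1,-1,-1,-1,-2,-1)`:
`L = ℤ⁵` with basis `(D₂, D₃, D₄, D₅, D₇)` and the intersection pairing given
by the Gram matrix below; `D₁ = -D₂ + D₄ + D₅ - D₇`, `D₆ = D₂ + D₃ - D₅ - D₇`,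
and the canonical class is `k = -(D₁ + ⋯ + D₇)`. -/

/-- Gram matrix of the intersection pairing in the basis `(D₂, D₃, D₄, D₅, D₇)`. -/
def gram : Matrix (Fin 5) (Fin 5) ℤ :=
  !![-1, 1, 0, 0, 0;
      1, -1, 1, 0, 0;
      0, 1, -1, 1, 0;
      0, 0, 1, -1, 0;
      0, 0, 0, 0, -1]

/-- The intersection pairing on `L = ℤ⁵`. -/
def picForm (x y : Fin 5 → ℤ) : ℤ := dotProduct x (gram.mulVec y)

def vD2 : Fin 5 → ℤ := ![1, 0, 0, 0, 0]
def vD3 : Fin 5 → ℤ := ![0, 1, 0, 0, 0]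
def vD4 : Fin 5 → ℤ := ![0, 0, 1, 0, 0]
def vD5 : Fin 5 → ℤ := ![0, 0, 0, 1, 0]
def vD7 : Fin 5 → ℤ := ![0, 0, 0, 0, 1]
def vD1 : Fin 5 → ℤ := -vD2 + vD4 + vD5 - vD7
def vD6 : Fin 5 → ℤ := vD2 + vD3 - vD5 - vD7

/-- The canonical class `k = -(D₁ + D₂ + D₃ + D₄ + D₅ + D₆ + D₇)`. -/
def vK : Fin 5 → ℤ := -(vD1 + vD2 + vD3 + vD4 + vD5 + vD6 + vD7)

/-- A `K`-isometry: a ℤ-linear automorphism of `L` preserving the intersection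
pairing and fixing the canonical class. -/
def IsKIsometry (φ : (Fin 5 → ℤ) ≃ₗ[ℤ] (Fin 5 → ℤ)) : Prop :=
  (∀ x y, picForm (φ x) (φ y) = picForm x y) ∧ φ vK = vK

/-- A toric system of length `m ≥ 3` in `(L, picForm, vK)`: a cyclic sequence
(indices modulo `m`) with `B(A_i, A_{i+1}) = 1`, `B(A_i, A_j) = 0` for
cyclically non-adjacent distinct `i, j`, and `∑ A_i = -k`. -/
def IsToricSystem {m : ℕ} [NeZero m] (A : Fin m → Fin 5 → ℤ) : Prop :=
  3 ≤ m ∧ (∀ i, picForm (A i) (A (i + 1)) = 1) ∧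
    (∀ i j : Fin m, i ≠ j → j ≠ i + 1 → i ≠ j + 1 → picForm (A i) (A j) = 0) ∧
    ∑ i, A i = -vK

/-- The standard toric system `(D₁, …, D₇)`. -/
def stdSys : Fin 7 → Fin 5 → ℤ := ![vD1, vD2, vD3, vD4, vD5, vD6, vD7]

/-!
Write `L = ℤH ⊕ ℤE₁ ⊕ ⋯ ⊕ ℤE₄` as the blow-up lattice of `ℙ²` in four points, with
`D₂ = E₁`, `D₃ = H - E₁ - E₂`, `D₄ = E₂`, `D₅ = H - E₂ - E₃`, `D₇ = E₄` and
`k = -3H + E₁ + ⋯ + E₄`. A `K`-isometry sends the basis `(D₂, D₃, D₄, D₅, D₇)` to five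
exceptional classes (`E² = E·k = -1`) with the same intersection matrix. By Cauchy–Schwarz
the exceptional classes are exactly the ten classes `Eᵢ`, `H - Eᵢ - Eⱼ`, and a search over
them yields 120 such 5-tuples; each is the matrix of an isometry fixing `k`, invertible over `ℤ`
because the Gram matrix is unimodular. Finally `D₂, D₃, D₄, D₅, D₇` occur in the toric system,
so an isometry is determined by its values on it.
-/

open scoped Matrix

section FormPreservingMatrices

variable {n R : Type*} [Fintype n] [CommRing R]

theorem Matrix.mulVec_dotProduct_mulVec_mulVec (G M : Matrix n n R) (x y : n → R) :
    (M *ᵥ x) ⬝ᵥ G *ᵥ (M *ᵥ y) = x ⬝ᵥ (Mᵀ * G * M) *ᵥ y := by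
  rw [← Matrix.vecMul_transpose, ← Matrix.dotProduct_mulVec, Matrix.mulVec_mulVec,
    Matrix.mulVec_mulVec, Matrix.mul_assoc]

theorem Matrix.forall_mulVec_dotProduct_mulVec_iff [DecidableEq n] (G M : Matrix n n R) :
    (∀ x y, (M *ᵥ x) ⬝ᵥ G *ᵥ (M *ᵥ y) = x ⬝ᵥ G *ᵥ y) ↔ Mᵀ * G * M = G := by
  simp only [Matrix.mulVec_dotProduct_mulVec_mulVec]
  refine ⟨fun h => Matrix.ext fun i j => ?_, fun h x y => by rw [h]⟩
  simpa [Matrix.mulVec_single_one, single_one_dotProduct] using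
    h (Pi.single i 1) (Pi.single j 1)

theorem Matrix.isUnit_det_of_transpose_mul_mul_eq {G M : Matrix n n R} [DecidableEq n]
    (hG : IsUnit G.det) (h : Mᵀ * G * M = G) : IsUnit M.det := by
  have hdet : M.det * M.det * G.det = 1 * G.det := by
    rw [one_mul]
    conv_rhs => rw [← h]
    rw [Matrix.det_mul, Matrix.det_mul, Matrix.det_transpose]
    ring
  exact IsUnit.of_mul_eq_one _ (hG.mul_right_cancel hdet)

end FormPreservingMatrices

theorem picForm_eq (x y : Fin 5 → ℤ) :
    picForm x y = x 0 * (y 1 - y 0) + x 1 * (y 0 - y 1 + y 2) + x 2 * (y 1 - y 2 + y 3) +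
      x 3 * (y 2 - y 3) - x 4 * y 4 := by
  simp [picForm, gram, Matrix.mulVec, dotProduct, Fin.sum_univ_five]
  ring

theorem det_gram : gram.det = 1 := by
  simp [gram, Matrix.det_succ_row_zero, Fin.sum_univ_succ, Fin.succAbove]

def IsKIsometryMatrix (M : Matrix (Fin 5) (Fin 5) ℤ) : Prop :=
  Mᵀ * gram * M = gram ∧ M *ᵥ vK = vK

theorem isKIsometry_iff_toMatrix' (φ : (Fin 5 → ℤ) ≃ₗ[ℤ] (Fin 5 → ℤ)) :
    IsKIsometry φ ↔ IsKIsometryMatrix (LinearMap.toMatrix' φ.toLinearMap) := by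
  simp only [IsKIsometry, IsKIsometryMatrix, picForm,
    ← Matrix.forall_mulVec_dotProduct_mulVec_iff, LinearMap.toMatrix'_mulVec, LinearEquiv.coe_coe]

theorem exists_kIsometry_toMatrix'_eq {M : Matrix (Fin 5) (Fin 5) ℤ} (hM : IsKIsometryMatrix M) :
    ∃ φ : (Fin 5 → ℤ) ≃ₗ[ℤ] (Fin 5 → ℤ),
      IsKIsometry φ ∧ LinearMap.toMatrix' φ.toLinearMap = M := by
  have := M.invertibleOfIsUnitDet
    (Matrix.isUnit_det_of_transpose_mul_mul_eq (by rw [det_gram]; exact isUnit_one) hM.1)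
  have hφ : LinearMap.toMatrix' (M.toLinearEquiv' this).toLinearMap = M := by
    rw [Matrix.toLinearEquiv'_apply, LinearMap.toMatrix'_toLin']
  exact ⟨M.toLinearEquiv' this, (isKIsometry_iff_toMatrix' _).2 (by rwa [hφ]), hφ⟩

theorem card_kIsometry_eq_card_kIsometryMatrix :
    Nat.card {φ : (Fin 5 → ℤ) ≃ₗ[ℤ] (Fin 5 → ℤ) // IsKIsometry φ} =
      Nat.card {M // IsKIsometryMatrix M} := by
  refine Nat.card_congr (Equiv.ofBijective
    (fun φ => ⟨LinearMap.toMatrix' φ.1.toLinearMap, (isKIsometry_iff_toMatrix' _).1 φ.2⟩) ⟨?_, ?_⟩)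
  · intro φ ψ h
    exact Subtype.ext (LinearEquiv.toLinearMap_injective
      (LinearMap.toMatrix'.injective (congrArg Subtype.val h)))
  · rintro ⟨M, hM⟩
    obtain ⟨φ, hφ, rfl⟩ := exists_kIsometry_toMatrix'_eq hM
    exact ⟨⟨φ, hφ⟩, rfl⟩

/- The classes `Eᵢ` and `H - Eᵢ - Eⱼ`. -/
def exceptionalClasses : List (Fin 5 → ℤ) :=
  [![1, 0, 0, 0, 0], ![0, 0, 1, 0, 0], ![1, 1, 0, -1, 0], ![0, 0, 0, 0, 1],
   ![0, 1, 0, 0, 0], ![-1, 0, 1, 1, 0], ![0, 1, 1, 0, -1], ![0, 0, 0, 1, 0],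
   ![1, 1, 0, 0, -1], ![0, 0, 1, 1, -1]]

theorem exceptional_degree_multiplicity_bounds {δ m₁ m₂ m₃ m₄ : ℤ}
    (hsq : m₁ ^ 2 + m₂ ^ 2 + m₃ ^ 2 + m₄ ^ 2 = δ ^ 2 + 1)
    (hdeg : m₁ + m₂ + m₃ + m₄ = 3 * δ - 1) :
    δ ∈ Finset.Icc 0 1 ∧ m₁ ∈ Finset.Icc (-1) 1 ∧ m₂ ∈ Finset.Icc (-1) 1 ∧
      m₃ ∈ Finset.Icc (-1) 1 ∧ m₄ ∈ Finset.Icc (-1) 1 := by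
  have cauchySchwarz : (3 * δ - 1) ^ 2 ≤ 4 * (δ ^ 2 + 1) := by
    nlinarith [sq_nonneg (m₁ - m₂), sq_nonneg (m₁ - m₃), sq_nonneg (m₁ - m₄),
      sq_nonneg (m₂ - m₃), sq_nonneg (m₂ - m₄), sq_nonneg (m₃ - m₄)]
  have hδ : 0 ≤ δ ∧ δ ≤ 1 := ⟨by nlinarith, by nlinarith⟩
  simp only [Finset.mem_Icc]
  refine ⟨hδ, ?_, ?_, ?_, ?_⟩ <;> constructor <;>
    nlinarith [sq_nonneg m₁, sq_nonneg m₂, sq_nonneg m₃, sq_nonneg m₄]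

theorem mem_exceptionalClasses_of_degree_multiplicities :
    ∀ δ ∈ Finset.Icc (0 : ℤ) 1, ∀ m₁ ∈ Finset.Icc (-1 : ℤ) 1, ∀ m₂ ∈ Finset.Icc (-1 : ℤ) 1,
    ∀ m₃ ∈ Finset.Icc (-1 : ℤ) 1, ∀ m₄ ∈ Finset.Icc (-1 : ℤ) 1,
      m₁ ^ 2 + m₂ ^ 2 + m₃ ^ 2 + m₄ ^ 2 = δ ^ 2 + 1 → m₁ + m₂ + m₃ + m₄ = 3 * δ - 1 →
      ![δ - m₃ - m₁, δ - m₃, δ - m₂, m₃, -m₄] ∈ exceptionalClasses := by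
  decide

theorem vK_eq : vK = ![-1, -2, -2, -1, 1] := by decide

/- `δ` and `mᵢ` below are the degree and multiplicities of `v = δ H - ∑ mᵢ Eᵢ`. -/
theorem mem_exceptionalClasses {v : Fin 5 → ℤ} (hv : picForm v v = -1) (hK : picForm v vK = -1) :
    v ∈ exceptionalClasses := by
  have hsq : (v 1 - v 0) ^ 2 + (v 1 + v 3 - v 2) ^ 2 + v 3 ^ 2 + (-v 4) ^ 2 =
      (v 1 + v 3) ^ 2 + 1 := by
    rw [picForm_eq] at hv
    linear_combination -hv
  have hdeg : (v 1 - v 0) + (v 1 + v 3 - v 2) + v 3 + -v 4 = 3 * (v 1 + v 3) - 1 := by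
    simp [picForm_eq, vK_eq] at hK
    linear_combination hK
  obtain ⟨hδ, h₁, h₂, h₃, h₄⟩ := exceptional_degree_multiplicity_bounds hsq hdeg
  convert mem_exceptionalClasses_of_degree_multiplicities _ hδ _ h₁ _ h₂ _ h₃ _ h₄ hsq hdeg
    using 1
  ext i
  fin_cases i <;> simp

/- The matrices whose columns are exceptional classes with Gram matrix `gram`, chosen column by
column so that the search stays small. -/
def kIsometryMatrices : List (Matrix (Fin 5) (Fin 5) ℤ) :=
  exceptionalClasses.flatMap fun c₀ =>
  (exceptionalClasses.filter fun c => picForm c₀ c = 1).flatMap fun c₁ =>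
  (exceptionalClasses.filter fun c => picForm c₀ c = 0 ∧ picForm c₁ c = 1).flatMap fun c₂ =>
  (exceptionalClasses.filter fun c =>
    picForm c₀ c = 0 ∧ picForm c₁ c = 0 ∧ picForm c₂ c = 1).flatMap fun c₃ =>
  (exceptionalClasses.filter fun c =>
    picForm c₀ c = 0 ∧ picForm c₁ c = 0 ∧ picForm c₂ c = 0 ∧ picForm c₃ c = 0).map fun c₄ =>
  Matrix.of fun i j => ![c₀, c₁, c₂, c₃, c₄] j i

theorem isKIsometryMatrix_of_mem_kIsometryMatrices :
    ∀ M ∈ kIsometryMatrices, IsKIsometryMatrix M := by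
  unfold IsKIsometryMatrix
  decide +kernel

theorem card_toFinset_kIsometryMatrices : kIsometryMatrices.toFinset.card = 120 := by
  decide +kernel

theorem picForm_single_single (i j : Fin 5) :
    picForm (Pi.single i 1) (Pi.single j 1) = gram i j := by
  simp [picForm]

theorem mem_kIsometryMatrices_of_isKIsometryMatrix {M : Matrix (Fin 5) (Fin 5) ℤ}
    (hM : IsKIsometryMatrix M) : M ∈ kIsometryMatrices := by
  have hpres : ∀ x y, picForm (M *ᵥ x) (M *ᵥ y) = picForm x y :=
    (Matrix.forall_mulVec_dotProduct_mulVec_iff _ _).2 hM.1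
  set c : Fin 5 → Fin 5 → ℤ := fun j => M *ᵥ Pi.single j 1
  have hc : ∀ i j, picForm (c i) (c j) = gram i j := fun i j => by
    rw [hpres, picForm_single_single]
  have hexc : ∀ j, c j ∈ exceptionalClasses := fun j => by
    refine mem_exceptionalClasses ?_ ?_
    · rw [hc]; fin_cases j <;> rfl
    · rw [← hM.2, hpres]; fin_cases j <;> decide
  have hM_cols : M = Matrix.of fun i j => ![c 0, c 1, c 2, c 3, c 4] j i := by
    ext i j; fin_cases j <;> simp [c]
  rw [hM_cols]
  simp only [kIsometryMatrices, List.mem_flatMap, List.mem_filter, List.mem_map, decide_eq_true_eq]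
  refine ⟨c 0, hexc 0, c 1, ⟨hexc 1, hc 0 1⟩, c 2, ⟨hexc 2, hc 0 2, hc 1 2⟩, c 3,
    ⟨hexc 3, hc 0 3, hc 1 3, hc 2 3⟩, c 4, ⟨hexc 4, hc 0 4, hc 1 4, hc 2 4, hc 3 4⟩, rfl⟩

theorem card_kIsometryMatrix : Nat.card {M // IsKIsometryMatrix M} = 120 := by
  rw [← card_toFinset_kIsometryMatrices, ← Nat.card_eq_finsetCard]
  exact Nat.card_congr (Equiv.subtypeEquivRight fun M => by
    rw [List.mem_toFinset]
    exact ⟨mem_kIsometryMatrices_of_isKIsometryMatrix,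
      isKIsometryMatrix_of_mem_kIsometryMatrices M⟩)

theorem card_kIsometry : Nat.card {φ : (Fin 5 → ℤ) ≃ₗ[ℤ] (Fin 5 → ℤ) // IsKIsometry φ} = 120 :=
  card_kIsometry_eq_card_kIsometryMatrix.trans card_kIsometryMatrix

theorem isToricSystem_stdSys : IsToricSystem stdSys := by
  refine ⟨by norm_num, ?_, ?_, ?_⟩ <;> decide

theorem injective_apply_stdSys :
    Function.Injective fun (φ : (Fin 5 → ℤ) ≃ₗ[ℤ] (Fin 5 → ℤ)) i => φ (stdSys i) := by
  intro φ ψ h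
  have hbasis : ∀ j : Fin 5, Pi.single j (1 : ℤ) = stdSys (![1, 2, 3, 4, 6] j) := by decide
  refine LinearEquiv.toLinearMap_injective (Module.Basis.ext (Pi.basisFun ℤ (Fin 5)) fun j => ?_)
  simpa [hbasis] using congrFun h (![1, 2, 3, 4, 6] j)

/-- On `X = TV(-2,-1,-1,-1,-1,-2,-1)`: (i) the group of `K`-isometries is finite
of order `120`; (ii) `(D₁, …, D₇)` is a toric system of length `7`;
(iii) a `K`-isometry is determined by its values on `(D₁, …, D₇)`, so the orbit
of the standard toric system consists of exactly `120` distinct toric systems. -/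
theorem kIsometry_orbit_of_standard_toricSystem :
    Set.Finite {φ : (Fin 5 → ℤ) ≃ₗ[ℤ] (Fin 5 → ℤ) | IsKIsometry φ} ∧
    Nat.card {φ : (Fin 5 → ℤ) ≃ₗ[ℤ] (Fin 5 → ℤ) // IsKIsometry φ} = 120 ∧
    IsToricSystem stdSys ∧
    (∀ φ ψ : (Fin 5 → ℤ) ≃ₗ[ℤ] (Fin 5 → ℤ), IsKIsometry φ → IsKIsometry ψ →
      (fun i => φ (stdSys i)) = (fun i => ψ (stdSys i)) → φ = ψ) ∧
    Set.ncard {A : Fin 7 → Fin 5 → ℤ |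
      ∃ φ : (Fin 5 → ℤ) ≃ₗ[ℤ] (Fin 5 → ℤ), IsKIsometry φ ∧
        A = fun i => φ (stdSys i)} = 120 := by
  have : Finite {φ : (Fin 5 → ℤ) ≃ₗ[ℤ] (Fin 5 → ℤ) // IsKIsometry φ} :=
    Nat.finite_of_card_ne_zero (by rw [card_kIsometry]; norm_num)
  have horbit : {A : Fin 7 → Fin 5 → ℤ | ∃ φ : (Fin 5 → ℤ) ≃ₗ[ℤ] (Fin 5 → ℤ),
      IsKIsometry φ ∧ A = fun i => φ (stdSys i)} =
      (fun φ i => φ (stdSys i)) '' {φ | IsKIsometry φ} := by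
    ext A; simp [eq_comm]
  refine ⟨Set.finite_coe_iff.mp this, card_kIsometry, isToricSystem_stdSys,
    fun φ ψ _ _ h => injective_apply_stdSys h, ?_⟩
  rw [horbit, Set.ncard_image_of_injective _ injective_apply_stdSys, ← Nat.card_coe_set_eq]
  exact card_kIsometry
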